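/- arXiv:2406.03982 — 4 statements merged into one kernel-verified Lean document; each statement's English description precedes it below -/
import Mathlib

section
/- Let X be a real Banach space and let C be an index type of cardinality 2^ℵ₀. Then the following are equivalent: (a) WeakDual ℝ X is separable; (b) there exists an injective continuous linear map from X into ℓ∞(ℕ); (c) there exists an injective continuous linear map from X into the ℓ₁-sum lp (fun _ : C => ℓ∞(ℕ)) 1 of 2^ℵ₀ copies of ℓ∞. -/
open Cardinal
open scoped ENNReal
set_option synthInstance.maxHeartbeats 1000000
set_option maxHeartbeats 1600000

noncomputable section
namespace WeakSep

variable {X : Type*} [NormedAddCommGroup X] [NormedSpace ℝ X]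

theorem exists_embed (f : ℕ → X →L[ℝ] ℝ)
    (hsep : ∀ x : X, (∀ n, f n x = 0) → x = 0) :
    ∃ T : X →L[ℝ] lp (fun _ : ℕ => ℝ) ⊤, Function.Injective T := by
  set g : ℕ → X →L[ℝ] ℝ := fun n => (1 + ‖f n‖)⁻¹ • f n with hg
  have hpos : ∀ n, (0:ℝ) < 1 + ‖f n‖ := fun n => by positivity
  have hb : ∀ (x : X) (n : ℕ), ‖g n x‖ ≤ ‖x‖ := by
    intro x n
    simp only [hg, ContinuousLinearMap.smul_apply, norm_smul, norm_inv,
      Real.norm_eq_abs, abs_of_pos (hpos n)]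
    rw [inv_mul_le_iff₀ (hpos n)]
    calc ‖f n x‖ ≤ ‖f n‖ * ‖x‖ := (f n).le_opNorm x
      _ ≤ (1 + ‖f n‖) * ‖x‖ := by nlinarith [norm_nonneg x, norm_nonneg (f n)]
  have hmem : ∀ x : X, Memℓp (fun n : ℕ => g n x) (⊤ : ℝ≥0∞) :=
    fun x => memℓp_infty ⟨‖x‖, by rintro y ⟨n, rfl⟩; exact hb x n⟩
  let L : X →ₗ[ℝ] lp (fun _ : ℕ => ℝ) ⊤ :=
    { toFun := fun x => ⟨fun n => g n x, hmem x⟩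
      map_add' := by
        intro x y; apply Subtype.ext; funext n
        exact map_add (g n) x y
      map_smul' := by
        intro a x; apply Subtype.ext; funext n
        exact map_smul (g n) a x }
  have hLapp : ∀ (x : X) (n : ℕ), (L x) n = g n x := fun x n => rfl
  have hbdd : ∀ x : X, ‖L x‖ ≤ 1 * ‖x‖ := by
    intro x
    rw [one_mul]
    exact lp.norm_le_of_forall_le (norm_nonneg x) (fun n => hb x n)
  refine ⟨L.mkContinuous 1 hbdd, ?_⟩
  have hz : ∀ x : X, L x = 0 → x = 0 := by
    intro x hx
    refine hsep x fun n => ?_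
    have h1 : g n x = 0 := by
      have := congrFun (congrArg (Subtype.val) hx) n
      simpa [hLapp] using this
    have h2 : (1 + ‖f n‖)⁻¹ * f n x = 0 := by simpa [hg] using h1
    rcases mul_eq_zero.1 h2 with h | h
    · exact absurd h (by positivity)
    · exact h
  intro x y hxy
  have : L (x - y) = 0 := by
    have : L x = L y := hxy
    rw [map_sub, this, sub_self]
  exact sub_eq_zero.mp (hz _ this)

theorem exists_separating_of_separable
    (h : TopologicalSpace.SeparableSpace (WeakDual ℝ X)) :
    ∃ f : ℕ → X →L[ℝ] ℝ, ∀ x : X, (∀ n, f n x = 0) → x = 0 := by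
  obtain ⟨s, hsc, hsd⟩ := TopologicalSpace.exists_countable_dense (WeakDual ℝ X)
  have hsne : s.Nonempty := hsd.nonempty
  obtain ⟨φ, hφ⟩ := hsc.exists_eq_range hsne
  refine ⟨fun n => WeakDual.toStrongDual (φ n), fun x hx => ?_⟩
  by_contra hx0
  obtain ⟨g, hg1, hgx⟩ := exists_dual_vector ℝ x (norm_ne_zero_iff.mpr hx0)
  have hU : IsOpen {ψ : WeakDual ℝ X | ψ x ≠ 0} :=
    isOpen_compl_singleton.preimage (WeakDual.eval_continuous x)
  have hUne : {ψ : WeakDual ℝ X | ψ x ≠ 0}.Nonempty := by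
    refine ⟨StrongDual.toWeakDual g, ?_⟩
    simp only [Set.mem_setOf_eq]
    intro h0
    rw [StrongDual.coe_toWeakDual] at h0
    rw [h0] at hgx
    exact hx0 (norm_eq_zero.mp hgx.symm)
  obtain ⟨ψ, hψx, hψs⟩ := hsd.inter_open_nonempty _ hU hUne
  rw [hφ] at hψs
  obtain ⟨n, rfl⟩ := hψs
  exact hψx (hx n)

theorem finite_span_step (f : ℕ → X →L[ℝ] ℝ)
    (hsep : ∀ x : X, (∀ n, f n x = 0) → x = 0)
    (s : Finset X) (φ : X →L[ℝ] ℝ) :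
    ∃ c : ℕ →₀ ℝ, ∀ x ∈ s, φ x = c.sum fun n a => a * f n x := by
  classical
  let ev : (X →L[ℝ] ℝ) →ₗ[ℝ] (↥s → ℝ) :=
    { toFun := fun ψ => fun x => ψ (x : X)
      map_add' := fun ψ χ => by funext x; simp
      map_smul' := fun a ψ => by funext x; simp }
  have hmem : ev φ ∈ Submodule.span ℝ (Set.range fun n => ev (f n)) := by
    by_contra hnot
    obtain ⟨ξ, hξ0, hξbot⟩ := Submodule.exists_dual_map_eq_bot_of_notMem hnot inferInstance
    have hker : ∀ n, ξ (ev (f n)) = 0 := by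
      intro n
      have h1 : ev (f n) ∈ Submodule.span ℝ (Set.range fun n => ev (f n)) :=
        Submodule.subset_span ⟨n, rfl⟩
      have h2 := Submodule.mem_map_of_mem (f := ξ) h1
      rw [hξbot] at h2
      simpa using h2
    set z : X := ∑ x ∈ Finset.univ (α := ↥s), ξ (Pi.single x 1) • (x : X) with hz
    have key : ∀ ψ : X →L[ℝ] ℝ, ψ z = ξ (ev ψ) := by
      intro ψ
      rw [hz, map_sum, LinearMap.pi_apply_eq_sum_univ ξ (ev ψ)]
      refine Finset.sum_congr rfl fun x _ => ?_
      rw [map_smul]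
      simp only [ev, LinearMap.coe_mk, AddHom.coe_mk, smul_eq_mul]
      have hps : (fun j : ↥s => if x = j then (1:ℝ) else 0) = Pi.single x 1 := by
        funext j; rw [Pi.single_apply]; simp [eq_comm]
      rw [show (ξ fun j => if x = j then (1:ℝ) else 0) = ξ (Pi.single x 1) from by rw [hps]]
      ring
    have hzz : z = 0 := hsep z (fun n => by rw [key (f n), hker n])
    exact hξ0 (by rw [← key φ, hzz, map_zero])
  obtain ⟨c, hc⟩ := Finsupp.mem_span_range_iff_exists_finsupp.mp hmem
  refine ⟨c, fun x hx => ?_⟩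
  have h2 := congrFun hc ⟨x, hx⟩
  simp only [Finsupp.sum, Finset.sum_apply, Pi.smul_apply, smul_eq_mul] at h2 ⊢
  simp only [ev, LinearMap.coe_mk, AddHom.coe_mk] at h2
  exact h2.symm

theorem rat_approx_step (f : ℕ → X →L[ℝ] ℝ) (c : ℕ →₀ ℝ) (s : Finset X)
    {ε : ℝ} (hε : 0 < ε) :
    ∃ q : ℕ →₀ ℚ, ∀ x ∈ s,
      |q.sum (fun n a => (a : ℝ) * f n x) - c.sum (fun n a => a * f n x)| < ε := by
  classical
  set R : ℝ := 1 + ∑ x ∈ s, ‖x‖ with hR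
  have hR1 : (1:ℝ) ≤ R := by
    rw [hR]; nlinarith [Finset.sum_nonneg (fun x (_ : x ∈ s) => norm_nonneg x)]
  have hRx : ∀ x ∈ s, ‖x‖ ≤ R := by
    intro x hx
    rw [hR]
    have := Finset.single_le_sum (f := fun x => ‖x‖) (fun y _ => norm_nonneg y) hx
    linarith
  set B : ℝ := 1 + ∑ n ∈ c.support, ‖f n‖ with hB
  have hB1 : (1:ℝ) ≤ B := by
    rw [hB]; nlinarith [Finset.sum_nonneg (fun n (_ : n ∈ c.support) => norm_nonneg (f n))]
  have hRBpos : 0 < R * B := by nlinarith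
  set δ : ℝ := ε / (2 * (R * B)) with hδ
  have hδpos : 0 < δ := by positivity
  have hq : ∀ n : ℕ, ∃ a : ℚ, |c n - (a:ℝ)| < δ := fun n => exists_rat_near (c n) hδpos
  choose qf hqf using hq
  set q : ℕ →₀ ℚ := Finsupp.onFinset c.support
    (fun n => if n ∈ c.support then qf n else 0)
    (fun n hn => by by_contra hns; simp [hns] at hn) with hqdef
  have hqsub : q.support ⊆ c.support := Finsupp.support_onFinset_subset
  refine ⟨q, fun x hx => ?_⟩
  have hqs : q.sum (fun n a => (a : ℝ) * f n x)
      = ∑ n ∈ c.support, ((q n : ℝ) * f n x) := by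
    apply Finsupp.sum_of_support_subset _ hqsub
    intro n _
    simp
  rw [hqs, Finsupp.sum]
  rw [← Finset.sum_sub_distrib]
  have hterm : ∀ n ∈ c.support, |(q n : ℝ) * f n x - c n * f n x| ≤ δ * (‖f n‖ * R) := by
    intro n hn
    have hqn : q n = qf n := by
      rw [hqdef, Finsupp.onFinset_apply, if_pos hn]
    rw [← sub_mul, abs_mul]
    have h1 : |(q n : ℝ) - c n| ≤ δ := by
      rw [hqn, abs_sub_comm]
      exact (hqf n).le
    have h2 : |f n x| ≤ ‖f n‖ * R := by
      calc |f n x| = ‖f n x‖ := (Real.norm_eq_abs _).symm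
        _ ≤ ‖f n‖ * ‖x‖ := (f n).le_opNorm x
        _ ≤ ‖f n‖ * R := mul_le_mul_of_nonneg_left (hRx x hx) (norm_nonneg _)
    exact mul_le_mul h1 h2 (abs_nonneg _) hδpos.le
  have hfin : δ * R * B = ε / 2 := by
    rw [hδ, div_mul_eq_mul_div, div_mul_eq_mul_div, div_eq_div_iff (by positivity) (by norm_num)]
    ring
  calc |∑ n ∈ c.support, ((q n : ℝ) * f n x - c n * f n x)|
      ≤ ∑ n ∈ c.support, |(q n : ℝ) * f n x - c n * f n x| := Finset.abs_sum_le_sum_abs _ _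
    _ ≤ ∑ n ∈ c.support, δ * (‖f n‖ * R) := Finset.sum_le_sum hterm
    _ = δ * R * ∑ n ∈ c.support, ‖f n‖ := by rw [Finset.mul_sum]; congr 1; ext n; ring
    _ ≤ δ * R * B := by
        have hsb : ∑ n ∈ c.support, ‖f n‖ ≤ B := by rw [hB]; linarith
        exact mul_le_mul_of_nonneg_left hsb (by positivity)
    _ = ε / 2 := hfin
    _ < ε := by linarith

theorem separable_of_separating (f : ℕ → X →L[ℝ] ℝ)
    (hsep : ∀ x : X, (∀ n, f n x = 0) → x = 0) :
    TopologicalSpace.SeparableSpace (WeakDual ℝ X) := by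
  classical
  have hinj : Function.Injective (topDualPairing ℝ X) := by
    intro a b hab
    ext x
    exact DFunLike.congr_fun hab x
  have hemb := WeakBilin.isEmbedding (B := topDualPairing ℝ X) hinj
  refine ⟨⟨Set.range (fun q : ℕ →₀ ℚ =>
      (StrongDual.toWeakDual (q.sum fun n a => (a : ℝ) • f n))),
      Set.countable_range _, ?_⟩⟩
  rw [dense_iff_inter_open]
  rintro U hU ⟨φ, hφU⟩
  obtain ⟨W, hWopen, hWpre⟩ := hemb.toIsInducing.isOpen_iff.mp hU
  have hφW : (fun x => topDualPairing ℝ X φ x) ∈ W := by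
    rw [← hWpre] at hφU; exact hφU
  obtain ⟨I, u, hIu, hpi⟩ := isOpen_pi_iff.mp hWopen _ hφW
  have hball : ∀ x ∈ I, ∃ e > 0, Metric.ball (topDualPairing ℝ X φ x) e ⊆ u x := by
    intro x hx
    exact Metric.isOpen_iff.mp (hIu x hx).1 _ (hIu x hx).2
  choose! e hepos hesub using hball
  set ε : ℝ := if h : I.Nonempty then I.inf' h e else 1 with hε
  have hεpos : 0 < ε := by
    rw [hε]
    split_ifs with h
    · obtain ⟨x, hx, hxe⟩ := Finset.exists_mem_eq_inf' h e
      rw [hxe]; exact hepos x hx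
    · norm_num
  have hεle : ∀ x ∈ I, ε ≤ e x := by
    intro x hx
    rw [hε, dif_pos ⟨x, hx⟩]
    exact Finset.inf'_le e hx
  obtain ⟨c, hc⟩ := finite_span_step f hsep I (WeakDual.toStrongDual φ)
  obtain ⟨q, hq⟩ := rat_approx_step f c I hεpos
  refine ⟨StrongDual.toWeakDual (q.sum fun n a => (a : ℝ) • f n), ?_, ⟨q, rfl⟩⟩
  rw [← hWpre]
  show (fun x => topDualPairing ℝ X _ x) ∈ W
  apply hpi
  rw [Set.mem_pi]
  intro x hx
  apply hesub x hx
  rw [Metric.mem_ball, Real.dist_eq]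
  have h1 : φ x = c.sum fun n a => a * f n x := hc x hx
  have h2 : (q.sum fun n a => (a : ℝ) • f n) x = q.sum fun n a => (a : ℝ) * f n x := by
    simp [Finsupp.sum, ContinuousLinearMap.sum_apply]
  have h3 : topDualPairing ℝ X (StrongDual.toWeakDual
      (q.sum fun n a => (a : ℝ) • f n)) x = q.sum fun n a => (a : ℝ) * f n x := by
    exact h2
  have h4 : topDualPairing ℝ X φ x = φ x := topDualPairing_apply _ _
  rw [h3, h4, h1]
  exact lt_of_lt_of_le (hq x hx) (hεle x hx)

variable {C : Type}

theorem summable_one (y : lp (fun _ : C => lp (fun _ : ℕ => ℝ) ⊤) 1) :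
    Summable fun c => ‖y c‖ := by
  have h := (lp.memℓp y).summable (by norm_num : 0 < (1:ℝ≥0∞).toReal)
  have h2 : (fun c : C => ‖y c‖ ^ (1:ℝ≥0∞).toReal) = fun c => ‖y c‖ := by
    funext c; rw [ENNReal.toReal_one, Real.rpow_one]
  rwa [h2] at h

theorem bound_wk (w : C → ℝ) (hw : ∀ c, |w c| ≤ 1) (k : ℕ)
    (y : lp (fun _ : C => lp (fun _ : ℕ => ℝ) ⊤) 1) (c : C) :
    ‖w c * y c k‖ ≤ ‖y c‖ := by
  rw [Real.norm_eq_abs, abs_mul]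
  have h1 : |y c k| ≤ ‖y c‖ := by
    have := lp.norm_apply_le_norm (ENNReal.top_ne_zero) (y c) k
    rwa [Real.norm_eq_abs] at this
  nlinarith [abs_nonneg (w c), abs_nonneg (y c k), hw c, norm_nonneg (y c)]

theorem summable_wk (w : C → ℝ) (hw : ∀ c, |w c| ≤ 1) (k : ℕ)
    (y : lp (fun _ : C => lp (fun _ : ℕ => ℝ) ⊤) 1) :
    Summable fun c => w c * y c k :=
  Summable.of_norm_bounded (summable_one y) (bound_wk w hw k y)

def phiCLM (w : C → ℝ) (hw : ∀ c, |w c| ≤ 1) (k : ℕ) :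
    lp (fun _ : C => lp (fun _ : ℕ => ℝ) ⊤) 1 →L[ℝ] ℝ :=
  LinearMap.mkContinuous
    { toFun := fun y => ∑' c, w c * y c k
      map_add' := fun y z => by
        show (∑' c, w c * (y + z) c k) = _
        have h3 : ∀ c, w c * (y + z) c k = w c * y c k + w c * z c k := by
          intro c
          have h1 : (y + z) c = y c + z c := by rw [lp.coeFn_add]; rfl
          rw [h1]
          have h2 : (y c + z c) k = y c k + z c k := by rw [lp.coeFn_add]; rfl
          rw [h2]; ring
        rw [tsum_congr h3]
        exact Summable.tsum_add (summable_wk w hw k y) (summable_wk w hw k z)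
      map_smul' := fun a y => by
        show (∑' c, w c * (a • y) c k) = _
        rw [RingHom.id_apply, smul_eq_mul, ← tsum_mul_left]
        refine tsum_congr fun c => ?_
        have h1 : (a • y) c = a • y c := by rw [lp.coeFn_smul]; rfl
        rw [h1]
        have h2 : (a • y c) k = a * y c k := by rw [lp.coeFn_smul]; rfl
        rw [h2]; ring }
    1 (fun y => by
      simp only [LinearMap.coe_mk, AddHom.coe_mk, one_mul]
      have hnorm : ‖y‖ = ∑' c, ‖y c‖ := by
        have h := lp.norm_eq_tsum_rpow (by norm_num : 0 < (1:ℝ≥0∞).toReal) y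
        rw [ENNReal.toReal_one] at h
        simp only [Real.rpow_one, one_div_one] at h
        exact h
      calc ‖∑' c, w c * y c k‖ ≤ ∑' c, ‖w c * y c k‖ :=
            norm_tsum_le_tsum_norm
              (Summable.of_nonneg_of_le (fun c => norm_nonneg _)
                (bound_wk w hw k y) (summable_one y))
        _ ≤ ∑' c, ‖y c‖ :=
            Summable.tsum_le_tsum (bound_wk w hw k y)
              (Summable.of_nonneg_of_le (fun c => norm_nonneg _)
                (bound_wk w hw k y) (summable_one y)) (summable_one y)
        _ = ‖y‖ := hnorm.symm)

theorem phiCLM_apply (w : C → ℝ) (hw : ∀ c, |w c| ≤ 1) (k : ℕ)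
    (y : lp (fun _ : C => lp (fun _ : ℕ => ℝ) ⊤) 1) :
    phiCLM w hw k y = ∑' c, w c * y c k := rfl

theorem moments_zero {t : C → ℝ} (htinj : Function.Injective t)
    (ht : ∀ c, t c ∈ Set.Icc (0:ℝ) 1) {g : C → ℝ}
    (hg : Summable fun c => |g c|)
    (hmom : ∀ n : ℕ, ∑' c, g c * t c ^ n = 0) (c₀ : C) : g c₀ = 0 := by
  classical
  set tc : C → Set.Icc (0:ℝ) 1 := fun c => ⟨t c, ht c⟩ with htc
  have hsum : ∀ F : C(Set.Icc (0:ℝ) 1, ℝ), Summable fun c => g c * F (tc c) := by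
    intro F
    apply Summable.of_norm_bounded (hg.mul_right ‖F‖)
    intro c
    rw [Real.norm_eq_abs, abs_mul]
    refine mul_le_mul_of_nonneg_left ?_ (abs_nonneg _)
    have := F.norm_coe_le_norm (tc c)
    rwa [Real.norm_eq_abs] at this
  have hpow : ∀ i : ℕ, Summable fun c => g c * t c ^ i := by
    intro i
    apply Summable.of_norm_bounded hg
    intro c
    rw [Real.norm_eq_abs, abs_mul]
    have h1 : |t c ^ i| ≤ 1 := by
      rw [abs_pow]
      refine pow_le_one₀ (abs_nonneg _) ?_
      rw [abs_le]; exact ⟨by linarith [(ht c).1], (ht c).2⟩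
    nlinarith [abs_nonneg (g c), abs_nonneg (t c ^ i)]
  have hpoly : ∀ p : Polynomial ℝ, (∑' c, g c * p.eval (t c)) = 0 := by
    intro p
    have hev : ∀ c, g c * p.eval (t c)
        = ∑ i ∈ Finset.range (p.natDegree + 1), p.coeff i * (g c * t c ^ i) := by
      intro c
      rw [Polynomial.eval_eq_sum_range, Finset.mul_sum]
      exact Finset.sum_congr rfl fun i _ => by ring
    rw [tsum_congr hev, Summable.tsum_finsetSum (fun i _ => (hpow i).mul_left (p.coeff i))]
    have : ∀ i ∈ Finset.range (p.natDegree + 1),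
        (∑' c, p.coeff i * (g c * t c ^ i)) = 0 := by
      intro i _
      rw [tsum_mul_left, hmom i, mul_zero]
    exact Finset.sum_eq_zero this
  have hcont : ∀ F : C(Set.Icc (0:ℝ) 1, ℝ), (∑' c, g c * F (tc c)) = 0 := by
    intro F
    set S : ℝ := ∑' c, |g c| with hS
    have hS0 : 0 ≤ S := tsum_nonneg fun c => abs_nonneg _
    have key : ∀ ε > (0:ℝ), |∑' c, g c * F (tc c)| ≤ ε * S := by
      intro ε hε
      obtain ⟨p, hp⟩ := exists_polynomial_near_continuousMap 0 1 F ε hε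
      set pc := p.toContinuousMapOn (Set.Icc (0:ℝ) 1) with hpc
      have hsplit : (∑' c, g c * F (tc c))
          = (∑' c, g c * (F - pc) (tc c)) + ∑' c, g c * pc (tc c) := by
        rw [← Summable.tsum_add (hsum (F - pc)) (hsum pc)]
        refine tsum_congr fun c => ?_
        rw [ContinuousMap.sub_apply]; ring
      have hpc0 : (∑' c, g c * pc (tc c)) = 0 := by
        have : ∀ c, g c * pc (tc c) = g c * p.eval (t c) := fun c => rfl
        rw [tsum_congr this]; exact hpoly p
      rw [hsplit, hpc0, add_zero]
      have hbd : ∀ c, ‖g c * (F - pc) (tc c)‖ ≤ |g c| * ε := by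
        intro c
        rw [Real.norm_eq_abs, abs_mul]
        refine mul_le_mul_of_nonneg_left ?_ (abs_nonneg _)
        have h1 := (F - pc).norm_coe_le_norm (tc c)
        rw [Real.norm_eq_abs] at h1
        have h2 : ‖F - pc‖ ≤ ε := by
          rw [norm_sub_rev]; exact hp.le
        linarith
      calc |∑' c, g c * (F - pc) (tc c)|
          ≤ ∑' c, ‖g c * (F - pc) (tc c)‖ := by
            rw [← Real.norm_eq_abs]
            exact norm_tsum_le_tsum_norm
              (Summable.of_nonneg_of_le (fun c => norm_nonneg _) hbd (hg.mul_right ε))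
        _ ≤ ∑' c, |g c| * ε := Summable.tsum_le_tsum hbd
            (Summable.of_nonneg_of_le (fun c => norm_nonneg _) hbd (hg.mul_right ε))
            (hg.mul_right ε)
        _ = S * ε := tsum_mul_right
        _ = ε * S := by ring
    by_contra hne
    have habs : 0 < |∑' c, g c * F (tc c)| := abs_pos.mpr hne
    have h := key (|∑' c, g c * F (tc c)| / (2 * (S + 1))) (by positivity)
    rw [div_mul_eq_mul_div, le_div_iff₀ (by positivity)] at h
    nlinarith
  -- now the bump function argument
  by_contra hZ
  set ε₀ : ℝ := |g c₀| / 2 with hε₀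
  have hε₀pos : 0 < ε₀ := by
    rw [hε₀]; have := abs_pos.mpr hZ; linarith
  obtain ⟨s₀, hs₀⟩ := Filter.eventually_atTop.mp
    (Metric.tendsto_nhds.mp hg.hasSum ε₀ hε₀pos)
  set J : Finset C := insert c₀ s₀ with hJ
  have hJc₀ : c₀ ∈ J := Finset.mem_insert_self _ _
  have htail : (∑' c : {c // c ∉ J}, |g c.1|) < ε₀ := by
    have h1 := hs₀ J (Finset.subset_insert _ _)
    rw [Real.dist_eq] at h1
    have h2 := Summable.sum_add_tsum_compl (s := J) hg
    have hconv2 : (∑' (x : ↑(↑J : Set C)ᶜ), |g ↑x|) = ∑' (c : {c // c ∉ J}), |g c.1| := rfl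
    rw [hconv2] at h2
    have h3 : (0:ℝ) ≤ ∑' c : {c // c ∉ J}, |g c.1| := tsum_nonneg fun c => abs_nonneg _
    rw [abs_lt] at h1
    linarith [h2, h1.1, h1.2]
  set δ : ℝ := if h : (J.erase c₀).Nonempty then (J.erase c₀).inf' h (fun c => |t c - t c₀|) else 1
    with hδ
  have hδpos : 0 < δ := by
    rw [hδ]
    split_ifs with h
    · obtain ⟨c, hc, hce⟩ := Finset.exists_mem_eq_inf' h (fun c => |t c - t c₀|)
      rw [hce]
      have : c ≠ c₀ := (Finset.mem_erase.mp hc).1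
      have : t c ≠ t c₀ := fun he => this (htinj he)
      exact abs_pos.mpr (sub_ne_zero.mpr this)
    · norm_num
  have hδle : ∀ c ∈ J.erase c₀, δ ≤ |t c - t c₀| := by
    intro c hc
    rw [hδ, dif_pos ⟨c, hc⟩]
    exact Finset.inf'_le _ hc
  set F : C(Set.Icc (0:ℝ) 1, ℝ) :=
    ⟨fun x => max 0 (1 - |(x:ℝ) - t c₀| / δ), by
      apply Continuous.max continuous_const
      exact continuous_const.sub
        (((continuous_subtype_val.sub continuous_const).abs).div_const δ)⟩ with hF
  have hF1 : F (tc c₀) = 1 := by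
    simp [hF, htc]
  have hF0 : ∀ c ∈ J.erase c₀, F (tc c) = 0 := by
    intro c hc
    have h1 : (1:ℝ) ≤ |t c - t c₀| / δ := by
      rw [le_div_iff₀ hδpos, one_mul]
      exact hδle c hc
    simp only [hF, htc, ContinuousMap.coe_mk]
    exact max_eq_left (by linarith)
  have hFle : ∀ x, |F x| ≤ 1 := by
    intro x
    rw [hF]
    simp only [ContinuousMap.coe_mk]
    rw [abs_of_nonneg (le_max_left _ _)]
    apply max_le (by norm_num)
    have : 0 ≤ |(x:ℝ) - t c₀| / δ := by positivity
    linarith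
  have hLF := hcont F
  rw [← Summable.sum_add_tsum_compl (s := J) (hsum F)] at hLF
  have hsumJ : (∑ c ∈ J, g c * F (tc c)) = g c₀ := by
    rw [Finset.sum_eq_single_of_mem c₀ hJc₀ (fun c hc hne => by
      rw [hF0 c (Finset.mem_erase.mpr ⟨hne, hc⟩), mul_zero])]
    rw [hF1, mul_one]
  rw [hsumJ] at hLF
  have hconv : (∑' (x : ↑(↑J : Set C)ᶜ), g ↑x * F (tc ↑x))
      = ∑' (c : {c // c ∉ J}), g c.1 * F (tc c.1) := rfl
  rw [hconv] at hLF
  have htb : |∑' c : {c // c ∉ J}, g c.1 * F (tc c.1)| ≤ ∑' c : {c // c ∉ J}, |g c.1| := by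
    have hbd : ∀ c : {c // c ∉ J}, ‖g c.1 * F (tc c.1)‖ ≤ |g c.1| := by
      intro c
      rw [Real.norm_eq_abs, abs_mul]
      nlinarith [abs_nonneg (g c.1), abs_nonneg (F (tc c.1)), hFle (tc c.1)]
    calc |∑' c : {c // c ∉ J}, g c.1 * F (tc c.1)|
        ≤ ∑' c : {c // c ∉ J}, ‖g c.1 * F (tc c.1)‖ := by
          rw [← Real.norm_eq_abs]
          exact norm_tsum_le_tsum_norm
            (Summable.of_nonneg_of_le (fun c => norm_nonneg _) hbd (hg.subtype _))
      _ ≤ ∑' c : {c // c ∉ J}, |g c.1| := Summable.tsum_le_tsum hbd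
          (Summable.of_nonneg_of_le (fun c => norm_nonneg _) hbd (hg.subtype _))
          (hg.subtype _)
  have : |g c₀| < ε₀ := by
    have h5 : g c₀ = -(∑' c : {c // c ∉ J}, g c.1 * F (tc c.1)) := by linarith
    rw [h5, abs_neg]
    exact lt_of_le_of_lt htb htail
  rw [hε₀] at this
  linarith [abs_nonneg (g c₀)]

theorem single_embed (c₀ : C) :
    ∃ S : lp (fun _ : ℕ => ℝ) ⊤ →L[ℝ] lp (fun _ : C => lp (fun _ : ℕ => ℝ) ⊤) 1,
      Function.Injective S := by
  classical
  have hnorm : ∀ a : lp (fun _ : ℕ => ℝ) ⊤,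
      ‖(lp.single 1 c₀ a : lp (fun _ : C => lp (fun _ : ℕ => ℝ) ⊤) 1)‖ = ‖a‖ := by
    intro a
    have := lp.norm_single (p := 1) (E := fun _ : C => lp (fun _ : ℕ => ℝ) ⊤)
      (by norm_num) c₀ a
    simpa using this
  let L : lp (fun _ : ℕ => ℝ) ⊤ →ₗ[ℝ] lp (fun _ : C => lp (fun _ : ℕ => ℝ) ⊤) 1 :=
    { toFun := fun a => lp.single 1 c₀ a
      map_add' := fun a b => by
        apply lp.ext
        funext j
        rw [lp.coeFn_add, Pi.add_apply, lp.single_apply, lp.single_apply, lp.single_apply]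
        by_cases h : j = c₀
        · subst h; simp
        · simp [h]
      map_smul' := fun r a => by
        rw [RingHom.id_apply]
        exact lp.single_smul (E := fun _ : C => lp (fun _ : ℕ => ℝ) ⊤) 1 c₀ r a }
  refine ⟨L.mkContinuous 1 (fun a => by simp [L, hnorm a]), ?_⟩
  intro a b hab
  have h0 : L (a - b) = 0 := by
    have : L a = L b := hab
    rw [map_sub, this, sub_self]
  have h1 : ‖L (a - b)‖ = 0 := by rw [h0, norm_zero]
  rw [show L (a - b) = lp.single 1 c₀ (a - b) from rfl, hnorm] at h1
  exact sub_eq_zero.mp (norm_eq_zero.mp h1)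

end WeakSep
end

theorem weakDual_separable_tfae (X : Type*) [NormedAddCommGroup X] [NormedSpace ℝ X]
    [CompleteSpace X] (C : Type) (hC : #C = Cardinal.continuum) :
    List.TFAE [
      TopologicalSpace.SeparableSpace (WeakDual ℝ X),
      ∃ T : X →L[ℝ] lp (fun _ : ℕ => ℝ) ⊤, Function.Injective T,
      ∃ T : X →L[ℝ] lp (fun _ : C => lp (fun _ : ℕ => ℝ) ⊤) 1, Function.Injective T] := by
  tfae_have 1 → 2 := by
    intro h
    obtain ⟨f, hf⟩ := WeakSep.exists_separating_of_separable h
    exact WeakSep.exists_embed f hf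
  tfae_have 2 → 3 := by
    rintro ⟨T, hT⟩
    have hne : Nonempty C := by
      rw [← Cardinal.mk_ne_zero_iff, hC]
      exact Cardinal.continuum_ne_zero
    obtain ⟨S, hS⟩ := WeakSep.single_embed (C := C) (Classical.arbitrary C)
    exact ⟨S.comp T, hS.comp hT⟩
  tfae_have 3 → 1 := by
    rintro ⟨T, hT⟩
    have he : Nonempty (C ≃ (Set.Icc (0:ℝ) 1)) :=
      Cardinal.eq.mp (hC.trans (Cardinal.mk_Icc_real zero_lt_one).symm)
    obtain ⟨e⟩ := he
    set t : C → ℝ := fun c => (e c : ℝ) with htdef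
    have ht : ∀ c, t c ∈ Set.Icc (0:ℝ) 1 := fun c => (e c).2
    have htinj : Function.Injective t := fun a b h => e.injective (Subtype.ext h)
    have hw : ∀ n : ℕ, ∀ c, |t c ^ n| ≤ 1 := by
      intro n c
      rw [abs_pow]
      refine pow_le_one₀ (abs_nonneg _) ?_
      rw [abs_le]; exact ⟨by linarith [(ht c).1], (ht c).2⟩
    set F : ℕ × ℕ → (X →L[ℝ] ℝ) :=
      fun kn => (WeakSep.phiCLM (fun c => t c ^ kn.2) (hw kn.2) kn.1).comp T with hF
    apply WeakSep.separable_of_separating (fun m => F ((Denumerable.eqv (ℕ × ℕ)).symm m))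
    intro x hx
    have hx' : ∀ kn : ℕ × ℕ, F kn x = 0 := by
      intro kn
      have := hx (Denumerable.eqv (ℕ × ℕ) kn)
      rwa [Equiv.symm_apply_apply] at this
    have hcoord : ∀ (k : ℕ) (c : C), (T x) c k = 0 := by
      intro k
      have hgsum : Summable fun c => |(T x) c k| := by
        apply Summable.of_nonneg_of_le (fun c => abs_nonneg _) ?_ (WeakSep.summable_one (T x))
        intro c
        have := lp.norm_apply_le_norm (ENNReal.top_ne_zero) ((T x) c) k
        rwa [Real.norm_eq_abs] at this
      refine WeakSep.moments_zero htinj ht hgsum ?_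
      intro n
      have h1 := hx' (k, n)
      have h2 : F (k, n) x = ∑' c, t c ^ n * (T x) c k := rfl
      rw [h2] at h1
      rw [← h1]
      exact tsum_congr fun c => by ring
    have hTx : T x = 0 := by
      rw [lp.eq_zero_iff_coeFn_eq_zero]
      funext c
      have : (T x) c = 0 := by
        rw [lp.eq_zero_iff_coeFn_eq_zero]
        funext k
        simpa using hcoord k c
      simpa using this
    exact hT (hTx.trans (map_zero T).symm)
  tfae_finish
end

section
/- Let ι be an index type of cardinality 2^ℵ₀ (for instance ι = ℝ) and let Y be the c₀-sum of ι copies of ℓ∞(ℕ): the subspace of the ℓ∞-sum lp (fun _ : ι => ℓ∞(ℕ)) ∞ consisting of families x = (x_t)_{t∈ι} with ‖x_t‖_∞ → 0 along the cofinite filter. Then there exists a 2-Lipschitz embedding of Y into ℓ∞(ℕ): a map F : Y → ℓ∞(ℕ) such that (1/2)·‖x − y‖ ≤ ‖F(x) − F(y)‖ ≤ ‖x − y‖ for all x, y ∈ Y. -/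
open Cardinal

noncomputable section C0Embed
namespace C0Embed

variable {ι : Type} (e : ι ≃ (ℕ → Bool))

local notation "E" => lp (fun _ : ℕ => ℝ) ⊤
local notation "XX" => lp (fun _ : ι => lp (fun _ : ℕ => ℝ) ⊤) ⊤

/-- `g` extends the finite sequence `s`. -/
def Ext (s : List Bool) (g : ℕ → Bool) : Prop := ∀ i < s.length, g i = s.getD i false

/-- the set of values `x t n` over `t` whose code extends `s`. -/
def A (x : XX) (s : List Bool) (n : ℕ) : Set ℝ :=
  (fun t : ι => ((x : ∀ _ : ι, E) t : ∀ _ : ℕ, ℝ) n) '' {t | Ext s (e t)}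

theorem ext_nonempty (s : List Bool) : {t | Ext s (e t)}.Nonempty := by
  refine ⟨e.symm fun i => s.getD i false, ?_⟩
  intro i hi
  simp [Equiv.apply_symm_apply]

theorem A_nonempty (x : XX) (s : List Bool) (n : ℕ) : (A e x s n).Nonempty :=
  (ext_nonempty e s).image _

theorem abs_mem_A_le (x : XX) {s : List Bool} {n : ℕ} {r : ℝ} (hr : r ∈ A e x s n) :
    |r| ≤ ‖x‖ := by
  obtain ⟨t, -, rfl⟩ := hr
  calc |((x : ∀ _ : ι, E) t : ∀ _ : ℕ, ℝ) n| = ‖((x : ∀ _ : ι, E) t : ∀ _ : ℕ, ℝ) n‖ := (Real.norm_eq_abs _).symm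
  _ ≤ ‖(x : ∀ _ : ι, E) t‖ := lp.norm_apply_le_norm ENNReal.top_ne_zero _ n
  _ ≤ ‖x‖ := lp.norm_apply_le_norm ENNReal.top_ne_zero x t

theorem A_bddAbove (x : XX) (s : List Bool) (n : ℕ) : BddAbove (A e x s n) :=
  ⟨‖x‖, fun r hr => (le_abs_self r).trans (abs_mem_A_le e x hr)⟩

theorem A_bddBelow (x : XX) (s : List Bool) (n : ℕ) : BddBelow (A e x s n) :=
  ⟨-‖x‖, fun r hr => neg_le_of_abs_le (abs_mem_A_le e x hr)⟩

/-- the raw embedding, on codes. -/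
def G (x : XX) : List Bool × ℕ × Bool → ℝ :=
  fun p => if p.2.2 then sSup (A e x p.1 p.2.1) else sInf (A e x p.1 p.2.1)

def Fraw (x : XX) : ∀ _ : ℕ, ℝ :=
  fun k => ((Encodable.decode (α := List Bool × ℕ × Bool) k).map (G e x)).getD 0

theorem abs_Fraw_le (x : XX) (k : ℕ) : |Fraw e x k| ≤ ‖x‖ := by
  rcases h : Encodable.decode (α := List Bool × ℕ × Bool) k with - | p
  · simp [Fraw, h, norm_nonneg]
  · have hne := A_nonempty e x p.1 p.2.1
    have hub := A_bddAbove e x p.1 p.2.1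
    have hlb := A_bddBelow e x p.1 p.2.1
    have h1 : |sSup (A e x p.1 p.2.1)| ≤ ‖x‖ := by
      rw [abs_le]
      constructor
      · obtain ⟨r, hr⟩ := hne
        exact le_trans (neg_le_of_abs_le (abs_mem_A_le e x hr)) (le_csSup hub hr)
      · exact csSup_le hne fun r hr => (le_abs_self r).trans (abs_mem_A_le e x hr)
    have h2 : |sInf (A e x p.1 p.2.1)| ≤ ‖x‖ := by
      rw [abs_le]
      constructor
      · exact le_csInf hne fun r hr => neg_le_of_abs_le (abs_mem_A_le e x hr)
      · obtain ⟨r, hr⟩ := hne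
        exact le_trans (csInf_le hlb hr) ((le_abs_self r).trans (abs_mem_A_le e x hr))
    simp only [Fraw, h, Option.map_some, Option.getD_some, G]
    split <;> assumption

def FF (x : XX) : E := ⟨Fraw e x, memℓp_infty ⟨‖x‖, by
  rintro - ⟨k, rfl⟩
  simpa [Real.norm_eq_abs] using abs_Fraw_le e x k⟩⟩

theorem FF_apply (x : XX) (p : List Bool × ℕ × Bool) :
    (FF e x : ∀ _ : ℕ, ℝ) (Encodable.encode p) = G e x p := by
  show Fraw e x _ = _
  simp [Fraw, Encodable.encodek]


theorem csSup_image_le_add {α : Type*} {T : Set α} (hT : T.Nonempty) {f g : α → ℝ}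
    (hf : BddAbove (f '' T)) {c : ℝ} (h : ∀ t ∈ T, g t ≤ f t + c) :
    sSup (g '' T) ≤ sSup (f '' T) + c := by
  refine csSup_le (hT.image g) ?_
  rintro r ⟨t, ht, rfl⟩
  exact (h t ht).trans (add_le_add_left (le_csSup hf ⟨t, ht, rfl⟩) c)

theorem abs_csSup_image_sub {α : Type*} {T : Set α} (hT : T.Nonempty) {f g : α → ℝ}
    (hf : BddAbove (f '' T)) (hg : BddAbove (g '' T)) {c : ℝ}
    (h : ∀ t ∈ T, |f t - g t| ≤ c) :
    |sSup (f '' T) - sSup (g '' T)| ≤ c := by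
  have h1 := csSup_image_le_add hT hg (f := g) (g := f) (c := c)
    (fun t ht => by have := (abs_le.mp (h t ht)).2; linarith)
  have h2 := csSup_image_le_add hT hf (f := f) (g := g) (c := c)
    (fun t ht => by have := (abs_le.mp (h t ht)).1; linarith)
  rw [abs_le]; constructor <;> linarith

theorem le_csInf_image_add {α : Type*} {T : Set α} (hT : T.Nonempty) {f g : α → ℝ}
    (hf : BddBelow (f '' T)) {c : ℝ} (h : ∀ t ∈ T, f t - c ≤ g t) :
    sInf (f '' T) - c ≤ sInf (g '' T) := by
  refine le_csInf (hT.image g) ?_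
  rintro r ⟨t, ht, rfl⟩
  exact le_trans (by linarith [csInf_le hf (Set.mem_image_of_mem f ht)]) (h t ht)

theorem abs_csInf_image_sub {α : Type*} {T : Set α} (hT : T.Nonempty) {f g : α → ℝ}
    (hf : BddBelow (f '' T)) (hg : BddBelow (g '' T)) {c : ℝ}
    (h : ∀ t ∈ T, |f t - g t| ≤ c) :
    |sInf (f '' T) - sInf (g '' T)| ≤ c := by
  have h1 := le_csInf_image_add hT hg (f := g) (g := f) (c := c)
    (fun t ht => by have := (abs_le.mp (h t ht)).1; linarith)
  have h2 := le_csInf_image_add hT hf (f := f) (g := g) (c := c)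
    (fun t ht => by have := (abs_le.mp (h t ht)).2; linarith)
  rw [abs_le]; constructor <;> linarith


theorem sub_apply (x y : XX) (t : ι) (n : ℕ) :
    (((x - y : XX) : ∀ _ : ι, E) t : ∀ _ : ℕ, ℝ) n
      = ((x : ∀ _ : ι, E) t : ∀ _ : ℕ, ℝ) n - ((y : ∀ _ : ι, E) t : ∀ _ : ℕ, ℝ) n := by
  have h : ((x - y : XX) : ∀ _ : ι, E) t = (x : ∀ _ : ι, E) t - (y : ∀ _ : ι, E) t := by
    rw [lp.coeFn_sub]; rfl
  rw [h, lp.coeFn_sub]; rfl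

theorem abs_sub_apply_le (x y : XX) (t : ι) (n : ℕ) :
    |((x : ∀ _ : ι, E) t : ∀ _ : ℕ, ℝ) n - ((y : ∀ _ : ι, E) t : ∀ _ : ℕ, ℝ) n| ≤ ‖x - y‖ := by
  rw [← sub_apply, ← Real.norm_eq_abs]
  calc ‖(((x - y : XX) : ∀ _ : ι, E) t : ∀ _ : ℕ, ℝ) n‖
      ≤ ‖((x - y : XX) : ∀ _ : ι, E) t‖ := lp.norm_apply_le_norm ENNReal.top_ne_zero _ n
    _ ≤ ‖x - y‖ := lp.norm_apply_le_norm ENNReal.top_ne_zero _ t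

theorem abs_G_sub_le (x y : XX) (p : List Bool × ℕ × Bool) :
    |G e x p - G e y p| ≤ ‖x - y‖ := by
  have hpt : ∀ t' ∈ {t' | Ext p.1 (e t')},
      |((x : ∀ _ : ι, E) t' : ∀ _ : ℕ, ℝ) p.2.1 - ((y : ∀ _ : ι, E) t' : ∀ _ : ℕ, ℝ) p.2.1|
        ≤ ‖x - y‖ := fun t' _ => abs_sub_apply_le x y t' p.2.1
  unfold G
  split
  · exact abs_csSup_image_sub (ext_nonempty e p.1) (A_bddAbove e x p.1 p.2.1)
      (A_bddAbove e y p.1 p.2.1) hpt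
  · exact abs_csInf_image_sub (ext_nonempty e p.1) (A_bddBelow e x p.1 p.2.1)
      (A_bddBelow e y p.1 p.2.1) hpt

theorem FF_sub_apply (x y : XX) (k : ℕ) :
    ((FF e x - FF e y : E) : ∀ _ : ℕ, ℝ) k = Fraw e x k - Fraw e y k := by
  rw [lp.coeFn_sub]; rfl

theorem norm_FF_sub_le (x y : XX) : ‖FF e x - FF e y‖ ≤ ‖x - y‖ := by
  refine lp.norm_le_of_forall_le (norm_nonneg _) fun k => ?_
  rw [FF_sub_apply, Real.norm_eq_abs]
  rcases h : Encodable.decode (α := List Bool × ℕ × Bool) k with - | p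
  · simp [Fraw, h, norm_nonneg]
  · simpa [Fraw, h] using abs_G_sub_le e x y p

theorem SI_bounds (x : XX) (s : List Bool) (n : ℕ) (t : ι) (δ : ℝ) (hδ : 0 ≤ δ)
    (hExt : Ext s (e t))
    (hsep : ∀ t', Ext s (e t') → t' ≠ t → ‖(x : ∀ _ : ι, E) t'‖ < δ)
    (hsm : ∃ t', Ext s (e t') ∧ t' ≠ t ∧ ‖(x : ∀ _ : ι, E) t'‖ < δ) :
    |sSup (A e x s n) - max (((x : ∀ _ : ι, E) t : ∀ _ : ℕ, ℝ) n) 0| ≤ δ ∧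
    |sInf (A e x s n) - min (((x : ∀ _ : ι, E) t : ∀ _ : ℕ, ℝ) n) 0| ≤ δ := by
  set a : ℝ := ((x : ∀ _ : ι, E) t : ∀ _ : ℕ, ℝ) n with ha
  have hne := A_nonempty e x s n
  have hub := A_bddAbove e x s n
  have hlb := A_bddBelow e x s n
  have habs : ∀ t' : ι, |((x : ∀ _ : ι, E) t' : ∀ _ : ℕ, ℝ) n| ≤ ‖(x : ∀ _ : ι, E) t'‖ :=
    fun t' => by
      rw [← Real.norm_eq_abs]; exact lp.norm_apply_le_norm ENNReal.top_ne_zero _ n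
  have hmem : a ∈ A e x s n := ⟨t, hExt, rfl⟩
  obtain ⟨t'', ht''e, ht''ne, ht''sm⟩ := hsm
  have hmem'' : ((x : ∀ _ : ι, E) t'' : ∀ _ : ℕ, ℝ) n ∈ A e x s n := ⟨t'', ht''e, rfl⟩
  have habs'' : |((x : ∀ _ : ι, E) t'' : ∀ _ : ℕ, ℝ) n| ≤ δ := (habs t'').trans ht''sm.le
  rw [abs_le] at habs''
  have hSle : sSup (A e x s n) ≤ max a δ := by
    refine csSup_le hne ?_
    rintro r ⟨t', ht', rfl⟩
    by_cases h : t' = t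
    · subst h; exact le_max_left _ _
    · exact le_trans (le_abs_self _)
        (le_trans ((habs t').trans (hsep t' ht' h).le) (le_max_right _ _))
  have hSge1 : a ≤ sSup (A e x s n) := le_csSup hub hmem
  have hSge2 : -δ ≤ sSup (A e x s n) := le_trans habs''.1 (le_csSup hub hmem'')
  have hIle1 : sInf (A e x s n) ≤ a := csInf_le hlb hmem
  have hIle2 : sInf (A e x s n) ≤ δ := (csInf_le hlb hmem'').trans habs''.2
  have hIge : min a (-δ) ≤ sInf (A e x s n) := by
    refine le_csInf hne ?_
    rintro r ⟨t', ht', rfl⟩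
    by_cases h : t' = t
    · subst h; exact min_le_left _ _
    · refine le_trans (min_le_right _ _) ?_
      have := (habs t').trans (hsep t' ht' h).le
      rw [abs_le] at this; exact this.1
  have hmax1 : a ≤ max a 0 := le_max_left a 0
  have hmax2 : (0 : ℝ) ≤ max a 0 := le_max_right a 0
  have hmin1 : min a 0 ≤ a := min_le_left a 0
  have hmin2 : min a 0 ≤ (0 : ℝ) := min_le_right a 0
  constructor
  · rw [abs_le]
    constructor
    · have : max a 0 ≤ sSup (A e x s n) + δ :=
        max_le (by linarith) (by linarith)
      linarith
    · have : max a δ ≤ max a 0 + δ := max_le (by linarith) (by linarith)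
      linarith
  · rw [abs_le]
    constructor
    · have : min a 0 - δ ≤ min a (-δ) := le_min (by linarith) (by linarith)
      linarith
    · have : sInf (A e x s n) ≤ min a 0 + δ := by
        rcases le_total a 0 with h | h
        · rw [min_eq_left h]; linarith
        · rw [min_eq_right h]; linarith
      linarith

theorem key (x y : XX)
    (hx : Filter.Tendsto (fun i => ‖(x : ∀ _ : ι, E) i‖) Filter.cofinite (nhds 0))
    (hy : Filter.Tendsto (fun i => ‖(y : ∀ _ : ι, E) i‖) Filter.cofinite (nhds 0))
    {ε : ℝ} (hε : 0 < ε) : ‖x - y‖ ≤ 2 * ‖FF e x - FF e y‖ + ε := by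
  classical
  have hneι : Nonempty ι := ⟨e.symm fun _ => false⟩
  set δ : ℝ := ε / 8 with hδdef
  have hδ : 0 < δ := by positivity
  -- choose a near-maximal coordinate
  have h1 : ‖x - y‖ - δ < ⨆ t, ‖((x - y : XX) : ∀ _ : ι, E) t‖ := by
    rw [← lp.norm_eq_ciSup]; linarith
  obtain ⟨t, ht⟩ := exists_lt_of_lt_ciSup h1
  have h2 : ‖((x - y : XX) : ∀ _ : ι, E) t‖ - δ
      < ⨆ n, ‖(((x - y : XX) : ∀ _ : ι, E) t : ∀ _ : ℕ, ℝ) n‖ := by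
    rw [← lp.norm_eq_ciSup]; linarith
  obtain ⟨n, hn⟩ := exists_lt_of_lt_ciSup h2
  set a : ℝ := ((x : ∀ _ : ι, E) t : ∀ _ : ℕ, ℝ) n with hadef
  set b : ℝ := ((y : ∀ _ : ι, E) t : ∀ _ : ℕ, ℝ) n with hbdef
  have hab : ‖x - y‖ - 2 * δ < |a - b| := by
    rw [Real.norm_eq_abs, sub_apply x y t n] at hn
    linarith
  -- the finitely many coordinates with large norm
  have hxfin : {t' | ¬ ‖(x : ∀ _ : ι, E) t'‖ < δ}.Finite :=
    Filter.eventually_cofinite.mp (hx (Iio_mem_nhds hδ))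
  have hyfin : {t' | ¬ ‖(y : ∀ _ : ι, E) t'‖ < δ}.Finite :=
    Filter.eventually_cofinite.mp (hy (Iio_mem_nhds hδ))
  have hT : ({t' | ¬ ‖(x : ∀ _ : ι, E) t'‖ < δ} ∪ {t' | ¬ ‖(y : ∀ _ : ι, E) t'‖ < δ}).Finite :=
    hxfin.union hyfin
  have hdiff : ∀ t' : ι, t' ≠ t → ∃ m, e t' m ≠ e t m := fun t' h =>
    Function.ne_iff.mp fun hc => h (e.injective hc)
  set d : ι → ℕ := fun t' => if h : t' ≠ t then Nat.find (hdiff t' h) else 0 with hd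
  set N : ℕ := hT.toFinset.sup d + 1 with hN
  set s : List Bool := List.ofFn fun i : Fin N => e t i with hs
  have hslen : s.length = N := List.length_ofFn
  have hsget : ∀ i, i < N → s.getD i false = e t i := by
    intro i hi
    rw [List.getD_eq_getElem s false (by rw [hslen]; exact hi)]
    simp only [hs, List.getElem_ofFn]
  have hExt_t : Ext s (e t) := fun i hi => (hsget i (hslen ▸ hi)).symm
  have hsep0 : ∀ t' ∈ ({t' | ¬ ‖(x : ∀ _ : ι, E) t'‖ < δ}
      ∪ {t' | ¬ ‖(y : ∀ _ : ι, E) t'‖ < δ} : Set ι), Ext s (e t') → t' = t := by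
    intro t' hmemT hext
    by_contra hne'
    have hdle : d t' ≤ hT.toFinset.sup d := Finset.le_sup (hT.mem_toFinset.mpr hmemT)
    have hdN : d t' < N := by omega
    have heq1 : e t' (d t') = s.getD (d t') false := hext (d t') (hslen ▸ hdN)
    have heq2 : e t' (d t') ≠ e t (d t') := by
      simp only [hd, dif_pos hne']
      exact Nat.find_spec (hdiff t' hne')
    exact heq2 (by rw [heq1, hsget _ hdN])
  have hsep : ∀ t', Ext s (e t') → t' ≠ t →
      ‖(x : ∀ _ : ι, E) t'‖ < δ ∧ ‖(y : ∀ _ : ι, E) t'‖ < δ := by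
    intro t' hext hne'
    constructor
    · by_contra hc; exact hne' (hsep0 t' (Or.inl hc) hext)
    · by_contra hc; exact hne' (hsep0 t' (Or.inr hc) hext)
  -- a small coordinate extending s
  have hinf : {t' | Ext s (e t')}.Infinite := by
    apply Set.infinite_of_injective_forall_mem
      (f := fun k : ℕ => e.symm fun i => if i < N then e t i else decide (i = N + k))
    · intro k k' hkk
      have h3 := congrArg e hkk
      rw [Equiv.apply_symm_apply, Equiv.apply_symm_apply] at h3
      have h4 := congrFun h3 (N + k)
      rw [if_neg (by omega), if_neg (by omega), decide_eq_decide] at h4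
      omega
    · intro k i hi
      rw [Equiv.apply_symm_apply, if_pos (hslen ▸ hi)]
      exact (hsget i (hslen ▸ hi)).symm
  obtain ⟨t'', ht''⟩ := (hinf.diff (hT.insert t)).nonempty
  have hext'' : Ext s (e t'') := ht''.1
  have hne'' : t'' ≠ t := fun h => ht''.2 (Set.mem_insert_iff.mpr (Or.inl h))
  have hxsm : ‖(x : ∀ _ : ι, E) t''‖ < δ :=
    not_not.mp fun hc => ht''.2 (Set.mem_insert_iff.mpr (Or.inr (Or.inl hc)))
  have hysm : ‖(y : ∀ _ : ι, E) t''‖ < δ :=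
    not_not.mp fun hc => ht''.2 (Set.mem_insert_iff.mpr (Or.inr (Or.inr hc)))
  -- apply the sup/inf estimates
  obtain ⟨hx1, hx2⟩ := SI_bounds e x s n t δ hδ.le hExt_t
    (fun t' h1' h2' => (hsep t' h1' h2').1) ⟨t'', hext'', hne'', hxsm⟩
  obtain ⟨hy1, hy2⟩ := SI_bounds e y s n t δ hδ.le hExt_t
    (fun t' h1' h2' => (hsep t' h1' h2').2) ⟨t'', hext'', hne'', hysm⟩
  -- the coordinates of FF x - FF y
  have hval : ∀ (z : XX) (bb : Bool), Fraw e z (Encodable.encode (s, n, bb))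
      = if bb then sSup (A e z s n) else sInf (A e z s n) := by
    intro z bb
    simp [Fraw, Encodable.encodek, G]
  have habs1 : |sSup (A e x s n) - sSup (A e y s n)| ≤ ‖FF e x - FF e y‖ := by
    calc |sSup (A e x s n) - sSup (A e y s n)|
        = ‖((FF e x - FF e y : E) : ∀ _ : ℕ, ℝ) (Encodable.encode (s, n, true))‖ := by
          rw [FF_sub_apply, hval x true, hval y true, Real.norm_eq_abs]; simp
      _ ≤ ‖FF e x - FF e y‖ := lp.norm_apply_le_norm ENNReal.top_ne_zero _ _
  have habs2 : |sInf (A e x s n) - sInf (A e y s n)| ≤ ‖FF e x - FF e y‖ := by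
    calc |sInf (A e x s n) - sInf (A e y s n)|
        = ‖((FF e x - FF e y : E) : ∀ _ : ℕ, ℝ) (Encodable.encode (s, n, false))‖ := by
          rw [FF_sub_apply, hval x false, hval y false, Real.norm_eq_abs]; simp
      _ ≤ ‖FF e x - FF e y‖ := lp.norm_apply_le_norm ENNReal.top_ne_zero _ _
  -- combine everything
  have hmm : max a 0 + min a 0 = a + 0 := max_add_min a 0
  have hmm' : max b 0 + min b 0 = b + 0 := max_add_min b 0
  have final : |a - b| ≤ |sSup (A e x s n) - sSup (A e y s n)|
      + |sInf (A e x s n) - sInf (A e y s n)| + 4 * δ := by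
    rw [abs_le] at hx1 hx2 hy1 hy2
    rcases abs_cases (a - b) with ⟨h, -⟩ | ⟨h, -⟩ <;> rw [h]
    · linarith [le_abs_self (sSup (A e x s n) - sSup (A e y s n)),
        le_abs_self (sInf (A e x s n) - sInf (A e y s n))]
    · linarith [neg_abs_le (sSup (A e x s n) - sSup (A e y s n)),
        neg_abs_le (sInf (A e x s n) - sInf (A e y s n))]
  linarith

end C0Embed
end C0Embed

open Cardinal

/-- The `c₀`-sum of a family of Banach spaces, viewed as the subset of its `ℓ∞`-sum
consisting of the families whose norms tend to `0` along the cofinite filter. -/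
def c0Sum {ι : Type u} (X : ι → Type v) [∀ i, NormedAddCommGroup (X i)] :
    Set (lp X ⊤) :=
  {x : lp X ⊤ | Filter.Tendsto (fun i => ‖(x : ∀ i, X i) i‖) Filter.cofinite (nhds 0)}

theorem c0_sum_of_linfty_two_lipschitz_embeds_into_linfty
    (ι : Type) (hι : #ι = Cardinal.continuum) :
    ∃ F : ↥(c0Sum (fun _ : ι => lp (fun _ : ℕ => ℝ) ⊤)) → lp (fun _ : ℕ => ℝ) ⊤,
      ∀ x y : ↥(c0Sum (fun _ : ι => lp (fun _ : ℕ => ℝ) ⊤)),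
        (1 / 2) * ‖(x : lp (fun _ : ι => lp (fun _ : ℕ => ℝ) ⊤) ⊤)
            - (y : lp (fun _ : ι => lp (fun _ : ℕ => ℝ) ⊤) ⊤)‖ ≤ ‖F x - F y‖ ∧
        ‖F x - F y‖ ≤ ‖(x : lp (fun _ : ι => lp (fun _ : ℕ => ℝ) ⊤) ⊤)
            - (y : lp (fun _ : ι => lp (fun _ : ℕ => ℝ) ⊤) ⊤)‖ := by
  have h1 : #(ℕ → Bool) = Cardinal.continuum := by
    rw [← Cardinal.power_def, Cardinal.mk_bool, Cardinal.mk_nat, Cardinal.two_power_aleph0]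
  obtain ⟨e⟩ := Cardinal.eq.mp (hι.trans h1.symm)
  refine ⟨fun x => C0Embed.FF e ↑x, fun x y => ?_⟩
  constructor
  · have h2 : ‖(x : lp (fun _ : ι => lp (fun _ : ℕ => ℝ) ⊤) ⊤) - ↑y‖
        ≤ 2 * ‖C0Embed.FF e ↑x - C0Embed.FF e ↑y‖ :=
      le_of_forall_pos_le_add fun ε hε => C0Embed.key e _ _ x.2 y.2 hε
    linarith
  · exact C0Embed.norm_FF_sub_le e _ _
end

section
/- Let M be a nonempty metric space. Then there exist a metric space Y whose topology is discrete (every point of Y is isolated), whose cardinality is at most the maximum of ℵ₀ and the density character of M, and which is a countable union of uniformly discrete subsets (Y = ⋃_{n∈ℕ} Y_n where for each n there is δ_n > 0 with d(y,y') ≥ δ_n for all distinct y,y' ∈ Y_n), together with an isometric embedding of M into the completion of Y. -/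
open Cardinal

/-- The density character of a topological space: the smallest cardinality of a dense subset. -/
noncomputable def densityChar (M : Type*) [TopologicalSpace M] : Cardinal :=
  sInf {c : Cardinal | ∃ s : Set M, Dense s ∧ #s = c}

/-- `Y` is a discrete metric space, of cardinality at most `max ℵ₀ (densityChar M)`, which is
a countable union of uniformly discrete subsets, and `M` embeds isometrically into the
completion of `Y`. -/
def IsGoodDiscreteApproximation (M : Type u) [MetricSpace M] (Y : Type u) [MetricSpace Y] :
    Prop :=
  DiscreteTopology Y ∧
  #Y ≤ max Cardinal.aleph0 (densityChar M) ∧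
  (∃ Yn : ℕ → Set Y, (⋃ n, Yn n) = Set.univ ∧
    ∀ n, ∃ δ : ℝ, 0 < δ ∧ ∀ y ∈ Yn n, ∀ y' ∈ Yn n, y ≠ y' → δ ≤ dist y y') ∧
  ∃ f : M → UniformSpace.Completion Y, Isometry f

namespace GoodDiscreteAux

noncomputable section

/-- The weight `2⁻¹ ^ n`. -/
def eps (n : ℕ) : ℝ := (2 : ℝ)⁻¹ ^ n

lemma eps_pos (n : ℕ) : 0 < eps n := pow_pos (by norm_num) n

lemma eps_anti {m n : ℕ} (h : m ≤ n) : eps n ≤ eps m :=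
  pow_le_pow_of_le_one (by norm_num) (by norm_num) h

lemma eps_tendsto : Filter.Tendsto eps Filter.atTop (nhds 0) :=
  tendsto_pow_atTop_nhds_zero_of_lt_one (by norm_num) (by norm_num)

/-- A copy of `α × ℕ`, as a fresh type carrying no instances. -/
@[ext]
structure AuxY (α : Type u) : Type u where
  fst : α
  snd : ℕ

variable {α : Type u} [MetricSpace α]

open Classical in
/-- The distance on `AuxY α`. -/
def auxDist (a b : AuxY α) : ℝ :=
  if a = b then 0 else dist a.fst b.fst + eps a.snd + eps b.snd

lemma auxDist_self (a : AuxY α) : auxDist a a = 0 := if_pos rfl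

lemma auxDist_ne {a b : AuxY α} (h : a ≠ b) :
    auxDist a b = dist a.fst b.fst + eps a.snd + eps b.snd := if_neg h

lemma auxDist_comm (a b : AuxY α) : auxDist a b = auxDist b a := by
  unfold auxDist
  rcases eq_or_ne a b with rfl | h
  · simp
  · rw [if_neg h, if_neg (Ne.symm h), dist_comm]; ring

lemma le_auxDist_ne {a b : AuxY α} (h : a ≠ b) : eps a.snd + eps b.snd ≤ auxDist a b := by
  rw [auxDist_ne h]
  have := dist_nonneg (x := a.fst) (y := b.fst); linarith

lemma auxDist_pos {a b : AuxY α} (h : a ≠ b) : 0 < auxDist a b :=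
  lt_of_lt_of_le (by have := eps_pos a.snd; have := eps_pos b.snd; linarith) (le_auxDist_ne h)

lemma auxDist_triangle (a b c : AuxY α) : auxDist a c ≤ auxDist a b + auxDist b c := by
  rcases eq_or_ne a c with rfl | hac
  · rw [auxDist_self]
    rcases eq_or_ne a b with rfl | hab
    · rw [auxDist_self]; norm_num
    · have h1 := auxDist_pos hab
      have h2 := auxDist_pos (Ne.symm hab)
      linarith
  · rcases eq_or_ne a b with rfl | hab
    · rw [auxDist_self]; simp
    · rcases eq_or_ne b c with rfl | hbc
      · rw [auxDist_self]; simp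
      · rw [auxDist_ne hac, auxDist_ne hab, auxDist_ne hbc]
        have := dist_triangle a.fst b.fst c.fst
        have := eps_pos b.snd
        linarith

/-- The metric space structure on `AuxY α`. -/
instance auxMetric : MetricSpace (AuxY α) where
  dist := auxDist
  dist_self := auxDist_self
  dist_comm := auxDist_comm
  dist_triangle := auxDist_triangle
  eq_of_dist_eq_zero := by
    intro a b h
    by_contra hne
    exact absurd h (ne_of_gt (auxDist_pos hne))

lemma dist_def (a b : AuxY α) : dist a b = auxDist a b := rfl

instance auxMetric_discrete : DiscreteTopology (AuxY α) := by
  rw [discreteTopology_iff_isOpen_singleton]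
  intro a
  have : {a} = Metric.ball a (eps (AuxY.snd a)) := by
    ext b
    simp only [Set.mem_singleton_iff, Metric.mem_ball]
    constructor
    · rintro rfl
      rw [dist_def, auxDist_self]; exact eps_pos _
    · intro hb
      by_contra hne
      have h1 : eps b.snd + eps a.snd ≤ auxDist b a := le_auxDist_ne hne
      rw [dist_def] at hb
      have := eps_pos b.snd
      linarith
  rw [this]
  exact Metric.isOpen_ball

lemma mk_auxY : #(AuxY α) = #α * ℵ₀ := by
  have : AuxY α ≃ α × ℕ :=
    ⟨fun a => (a.fst, a.snd), fun p => ⟨p.1, p.2⟩, fun a => rfl, fun p => rfl⟩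
  simp [Cardinal.mk_congr this]

end

end GoodDiscreteAux

open GoodDiscreteAux in
theorem embeds_into_completion_of_discrete (M : Type u) [MetricSpace M] [Nonempty M] :
    ∃ (Y : Type u) (m : MetricSpace Y), @IsGoodDiscreteApproximation M _ Y m := by
  have hne : {c : Cardinal | ∃ s : Set M, Dense s ∧ #s = c}.Nonempty :=
    ⟨#(Set.univ : Set M), Set.univ, dense_univ, rfl⟩
  obtain ⟨s, hs, hcard⟩ : ∃ s : Set M, Dense s ∧ #s = densityChar M := csInf_mem hne
  refine ⟨AuxY ↥s, auxMetric, auxMetric_discrete, ?_, ?_, ?_⟩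
  · -- cardinality
    rw [mk_auxY, hcard]
    calc densityChar M * ℵ₀ ≤ max (max (densityChar M) ℵ₀) ℵ₀ := Cardinal.mul_le_max _ _
      _ = max ℵ₀ (densityChar M) := by rw [max_assoc, max_self, max_comm]
  · -- countable union of uniformly discrete sets
    refine ⟨fun n => {y | y.snd ≤ n}, ?_, fun n => ⟨eps n, eps_pos n, ?_⟩⟩
    · ext y; simp only [Set.mem_iUnion, Set.mem_setOf_eq, Set.mem_univ, iff_true]
      exact ⟨y.snd, le_rfl⟩
    · intro y hy y' hy' hne'
      have h1 : eps y.snd + eps y'.snd ≤ auxDist y y' := le_auxDist_ne hne'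
      have h2 : eps n ≤ eps y.snd := eps_anti hy
      have h3 : eps n ≤ eps y'.snd := eps_anti hy'
      have : (0:ℝ) < eps n := eps_pos n
      rw [dist_def]
      linarith
  · -- isometric embedding into the completion
    have key : ∀ (x : M) (n : ℕ), ∃ z : s, dist x (z : M) < eps n := by
      intro x n
      obtain ⟨b, hb, hbd⟩ := Metric.mem_closure_iff.1 (hs x) (eps n) (eps_pos n)
      exact ⟨⟨b, hb⟩, hbd⟩
    choose u hu using key
    set g : M → ℕ → AuxY ↥s := fun x n => ⟨u x n, n⟩ with hg
    have hest : ∀ (x y : M) (n : ℕ), |dist (g x n) (g y n) - dist x y| ≤ 4 * eps n := by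
      intro x y n
      have hx := hu x n
      have hy := hu y n
      have hεn := eps_pos n
      rcases eq_or_ne (g x n) (g y n) with heq | hne'
      · have huv : (u x n : M) = (u y n : M) := congrArg Subtype.val (congrArg AuxY.fst heq)
        have hdxy : dist x y ≤ 2 * eps n := by
          calc dist x y ≤ dist x (u x n : M) + dist (u y n : M) y := by
                rw [huv]; exact dist_triangle _ _ _
            _ ≤ 2 * eps n := by rw [dist_comm (u y n : M) y]; linarith
        rw [heq, dist_self, abs_le]
        have := dist_nonneg (x := x) (y := y)
        constructor <;> linarith
      · have heq2 : dist (g x n) (g y n) = dist (u x n : M) (u y n : M) + eps n + eps n := by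
          rw [dist_def, auxDist_ne hne']
          rfl
        rw [heq2]
        have hdd : |dist (u x n : M) (u y n : M) - dist x y| ≤ 2 * eps n := by
          have := dist_dist_dist_le (u x n : M) (u y n : M) x y
          rw [Real.dist_eq] at this
          have h1 : dist (u x n : M) x < eps n := by rw [dist_comm]; exact hx
          have h2 : dist (u y n : M) y < eps n := by rw [dist_comm]; exact hy
          linarith
        rw [abs_le] at hdd ⊢
        constructor <;> linarith [hdd.1, hdd.2]
    have hcauchy : ∀ x : M, CauchySeq (fun n => ((g x n : AuxY ↥s) : UniformSpace.Completion (AuxY ↥s))) := by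
      intro x
      have : CauchySeq (g x) := by
        apply cauchySeq_of_le_tendsto_0 (fun n => 4 * eps n)
        · intro n m N hn hm
          have h1 : dist (g x n) (g x m) ≤ dist x (u x n : M) + dist x (u x m : M) + eps n + eps m := by
            rcases eq_or_ne (g x n) (g x m) with heq | hne'
            · rw [heq, dist_self]
              have := dist_nonneg (x := x) (y := (u x n : M))
              have := dist_nonneg (x := x) (y := (u x m : M))
              have := eps_pos n; have := eps_pos m
              linarith
            · have heq2 : dist (g x n) (g x m) = dist (u x n : M) (u x m : M) + eps n + eps m := by
                rw [dist_def, auxDist_ne hne']; rfl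
              rw [heq2]
              have := dist_triangle (u x n : M) x (u x m : M)
              rw [dist_comm (u x n : M) x] at this
              linarith
          have h2 : dist x (u x n : M) < eps n := hu x n
          have h3 : dist x (u x m : M) < eps m := hu x m
          have h4 : eps n ≤ eps N := eps_anti hn
          have h5 : eps m ≤ eps N := eps_anti hm
          linarith
        · simpa using eps_tendsto.const_mul (4 : ℝ)
      exact (UniformSpace.Completion.uniformContinuous_coe (AuxY ↥s)).comp_cauchySeq this
    have hconv : ∀ x : M, ∃ L, Filter.Tendsto
        (fun n => ((g x n : AuxY ↥s) : UniformSpace.Completion (AuxY ↥s))) Filter.atTop (nhds L) :=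
      fun x => cauchySeq_tendsto_of_complete (hcauchy x)
    choose f hf using hconv
    refine ⟨f, Isometry.of_dist_eq fun x y => ?_⟩
    have h1 : Filter.Tendsto (fun n => dist ((g x n : AuxY ↥s) : UniformSpace.Completion (AuxY ↥s))
        ((g y n : AuxY ↥s) : UniformSpace.Completion (AuxY ↥s))) Filter.atTop (nhds (dist (f x) (f y))) :=
      (hf x).dist (hf y)
    have h2 : Filter.Tendsto (fun n => dist ((g x n : AuxY ↥s) : UniformSpace.Completion (AuxY ↥s))
        ((g y n : AuxY ↥s) : UniformSpace.Completion (AuxY ↥s))) Filter.atTop (nhds (dist x y)) := by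
      rw [tendsto_iff_dist_tendsto_zero]
      apply squeeze_zero (fun n => dist_nonneg) (g := fun n => 4 * eps n)
      · intro n
        rw [Real.dist_eq, UniformSpace.Completion.dist_eq]
        exact hest x y n
      · simpa using eps_tendsto.const_mul (4 : ℝ)
    exact tendsto_nhds_unique h1 h2
end

section
/- Let M be a locally separable metric space (every point has a separable neighborhood) whose density character is at most 2^ℵ₀. Then there exists a sequence (f_n)_{n∈ℕ} of 1-Lipschitz functions f_n : M → ℝ with the following property: for every x ∈ M there exists ε₀ > 0 such that for every ε with 0 < ε < ε₀ and every Lipschitz function g : M → ℝ whose support is contained in the open ball B(x,ε) (i.e., g vanishes outside B(x,ε)), there exists K > 0 satisfying |g(y) − g(z)| ≤ K · sup_{n∈ℕ} |f_n(y) − f_n(z)| for all y, z ∈ M. -/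
open Cardinal Metric TopologicalSpace Set

section Aux

variable {M : Type*} [MetricSpace M]

/-- Radii (capped at 2) of separable balls around `x`. -/
def sepSet (x : M) : Set ℝ := {r | r ≤ 2 ∧ IsSeparable (ball x r)}

lemma zero_mem_sepSet (x : M) : (0:ℝ) ∈ sepSet x :=
  ⟨by norm_num, by rw [Metric.ball_zero]; exact Set.countable_empty.isSeparable⟩

lemma bddAbove_sepSet (x : M) : BddAbove (sepSet x) := ⟨2, fun r hr => hr.1⟩

/-- The (capped) separability radius. -/
noncomputable def sRad (x : M) : ℝ := sSup (sepSet x)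

lemma sRad_nonneg (x : M) : 0 ≤ sRad x :=
  le_csSup (bddAbove_sepSet x) (zero_mem_sepSet x)

lemma sRad_le_two (x : M) : sRad x ≤ 2 :=
  csSup_le ⟨0, zero_mem_sepSet x⟩ fun r hr => hr.1

lemma sRad_lip (x y : M) : sRad x ≤ sRad y + dist x y := by
  apply csSup_le ⟨0, zero_mem_sepSet x⟩
  intro r hr
  have hmem : r - dist x y ∈ sepSet y := by
    refine ⟨by linarith [hr.1, dist_nonneg (x := x) (y := y)], ?_⟩
    refine hr.2.mono fun z hz => ?_
    simp only [mem_ball] at hz ⊢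
    have := dist_triangle z y x
    rw [dist_comm y x] at this
    linarith
  have h1 := le_csSup (bddAbove_sepSet y) hmem
  have h2 : sRad y = sSup (sepSet y) := rfl
  linarith

lemma isSeparable_ball_lt (x : M) {r : ℝ} (h : r < sRad x) : IsSeparable (ball x r) := by
  obtain ⟨r', hr', hlt⟩ := exists_lt_of_lt_csSup ⟨0, zero_mem_sepSet x⟩ h
  exact hr'.2.mono (ball_subset_ball hlt.le)

lemma sRad_pos (hloc : ∀ x : M, ∃ U ∈ nhds x, IsSeparable U) (x : M) : 0 < sRad x := by
  obtain ⟨U, hU, hsep⟩ := hloc x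
  obtain ⟨r, hr, hrU⟩ := Metric.mem_nhds_iff.mp hU
  have hmem : min r 2 ∈ sepSet x :=
    ⟨min_le_right _ _, (hsep.mono (subset_trans (ball_subset_ball (min_le_left _ _)) hrU))⟩
  have h1 := le_csSup (bddAbove_sepSet x) hmem
  have h2 : sRad x = sSup (sepSet x) := rfl
  have h3 : 0 < min r 2 := lt_min hr (by norm_num)
  linarith

/-- one step of the chain relation -/
def pieceRel (y z : M) : Prop := dist y z < sRad y / 4 ∧ dist y z < sRad z / 4

lemma pieceRel_symm : Symmetric (pieceRel (M := M)) := fun y z h =>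
  ⟨by rw [dist_comm]; exact h.2, by rw [dist_comm]; exact h.1⟩

def pieceE (y z : M) : Prop := Relation.ReflTransGen pieceRel y z

lemma pieceE_refl (x : M) : pieceE x x := Relation.ReflTransGen.refl
lemma pieceE_symm {x y : M} (h : pieceE x y) : pieceE y x :=
  (@Relation.ReflTransGen.symmetric _ _ ⟨pieceRel_symm⟩).symm _ _ h
lemma pieceE_trans {x y z : M} (h : pieceE x y) (h' : pieceE y z) : pieceE x z := h.trans h'

def piece (x : M) : Set M := {y | pieceE x y}

lemma mem_piece_self (x : M) : x ∈ piece x := pieceE_refl x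

lemma piece_eq_of {x y : M} (h : pieceE x y) : piece x = piece y := by
  ext z; exact ⟨fun hz => pieceE_trans (pieceE_symm h) hz, fun hz => pieceE_trans h hz⟩

lemma ball_subset_piece (y : M) : ball y (sRad y / 5) ⊆ piece y := by
  intro w hw
  rw [mem_ball, dist_comm] at hw
  have h1 : dist y w < sRad y / 4 := by linarith [sRad_nonneg y]
  have hlip := sRad_lip y w
  have h2 : dist y w < sRad w / 4 := by linarith
  exact Relation.ReflTransGen.single ⟨h1, h2⟩

lemma le_dist_of_notMem_piece {y z : M} (h : z ∉ piece y) : sRad y / 5 ≤ dist y z := by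
  by_contra hc
  push_neg at hc
  exact h (ball_subset_piece y (by simpa [mem_ball, dist_comm] using hc))

/-- reachable-in-`n`-steps sets -/
def chainSet (x : M) : ℕ → Set M
  | 0 => {x}
  | n+1 => ⋃ y ∈ chainSet x n, ball y (sRad y / 4)

lemma chainSet_separable (hpos : ∀ x : M, 0 < sRad x) (x : M) :
    ∀ n, IsSeparable (chainSet x n) := by
  intro n
  induction n with
  | zero => exact (Set.countable_singleton x).isSeparable
  | succ n ih =>
    obtain ⟨c, hc, hsub⟩ := ih
    have hcover : chainSet x (n+1) ⊆ ⋃ d ∈ c, ball d (sRad d / 2) := by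
      intro w hw
      simp only [chainSet, mem_iUnion, exists_prop] at hw
      obtain ⟨y, hy, hw⟩ := hw
      have hy' : y ∈ closure c := hsub hy
      obtain ⟨d, hd, hyd⟩ := Metric.mem_closure_iff.mp hy' (sRad y / 100) (by linarith [hpos y])
      have hdy : sRad y - sRad y / 100 ≤ sRad d := by
        have := sRad_lip y d; linarith
      have hwd : dist w d < sRad d / 2 := by
        have h1 := dist_triangle w y d
        rw [dist_comm w y] at h1
        rw [mem_ball, dist_comm] at hw
        have hy0 := hpos y
        linarith
      simp only [mem_iUnion, exists_prop]
      exact ⟨d, hd, mem_ball.mpr hwd⟩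
    have hc' : IsSeparable (⋃ d ∈ c, ball d (sRad d / 2)) := by
      rw [Set.biUnion_eq_iUnion]
      have := hc.to_subtype
      exact IsSeparable.iUnion fun d => isSeparable_ball_lt _ (by linarith [hpos d.1])
    exact hc'.mono hcover

lemma piece_subset_chain (x : M) : piece x ⊆ ⋃ n, chainSet x n := by
  intro y hy
  induction hy with
  | refl => exact mem_iUnion.mpr ⟨0, rfl⟩
  | tail _hab hbc ih =>
    obtain ⟨n, hn⟩ := mem_iUnion.mp ih
    refine mem_iUnion.mpr ⟨n+1, ?_⟩
    simp only [chainSet, mem_iUnion, exists_prop]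
    exact ⟨_, hn, mem_ball.mpr (by rw [dist_comm]; exact hbc.1)⟩

lemma isSeparable_piece (hpos : ∀ x : M, 0 < sRad x) (x : M) : IsSeparable (piece x) :=
  (IsSeparable.iUnion (chainSet_separable hpos x)).mono (piece_subset_chain x)

/-- set of codes of prefixes of a binary sequence -/
def pref (b : ℕ → Bool) : Set ℕ :=
  Set.range fun n => Encodable.encode (List.ofFn fun i : Fin n => b i)

lemma pref_nonempty (b : ℕ → Bool) : Encodable.encode ([] : List Bool) ∈ pref b :=
  ⟨0, by simp⟩

lemma pref_anti {b b' : ℕ → Bool} (h : b ≠ b') : ∃ m, m ∈ pref b ∧ m ∉ pref b' := by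
  obtain ⟨n, hn⟩ := Function.ne_iff.mp h
  refine ⟨Encodable.encode (List.ofFn fun i : Fin (n+1) => b i), ⟨n+1, rfl⟩, ?_⟩
  rintro ⟨n', hn'⟩
  have hl := Encodable.encode_injective hn'
  have hlen : n' = n + 1 := by
    have := congrArg List.length hl
    simpa using this
  subst hlen
  have := List.ofFn_inj.mp hl
  exact hn (congrFun this ⟨n, Nat.lt_succ_self n⟩).symm

lemma exists_denseSeq (hpos : ∀ x : M, 0 < sRad x) (x : M) :
    ∃ p : ℕ → M, (∀ k, p k ∈ piece x) ∧
      ∀ y ∈ piece x, ∀ η > 0, ∃ k, dist y (p k) < η := by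
  have hsep := isSeparable_piece hpos x
  have : SeparableSpace (piece x) := hsep.separableSpace
  have hne' : Nonempty (piece x) := ⟨⟨x, mem_piece_self x⟩⟩
  obtain ⟨u, hu_count, hu_dense⟩ := exists_countable_dense (piece x)
  have hne : u.Nonempty := hu_dense.nonempty
  obtain ⟨seq, hseq⟩ := hu_count.exists_eq_range hne
  refine ⟨fun k => (seq k : M), fun k => (seq k).2, ?_⟩
  intro y hy η hη
  have hdr : DenseRange seq := by rw [DenseRange, ← hseq]; exact hu_dense
  obtain ⟨k, hk⟩ := denseRange_iff.mp hdr ⟨y, hy⟩ η hη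
  exact ⟨k, by rwa [Subtype.dist_eq] at hk⟩

def pieceSetoid (M : Type*) [MetricSpace M] : Setoid M :=
  ⟨pieceE, ⟨pieceE_refl, pieceE_symm, pieceE_trans⟩⟩

lemma exists_data (hpos : ∀ x : M, 0 < sRad x) {D : Set M} (hD : Dense D)
    (hcard : #D ≤ Cardinal.continuum) :
    ∃ (ι : M → ℕ → Bool) (p : M → ℕ → M),
      (∀ y z, pieceE y z → ι y = ι z ∧ p y = p z) ∧
      (∀ y z, ¬ pieceE y z → ι y ≠ ι z) ∧
      (∀ w k, p w k ∈ piece w) ∧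
      (∀ w, ∀ y ∈ piece w, ∀ η > 0, ∃ k, dist y (p w k) < η) := by
  letI st := pieceSetoid M
  have hφ : ∀ q : Quotient st, ∃ d : M, d ∈ D ∧ Quotient.mk st d = q := by
    intro q
    have hball : (ball q.out (sRad q.out / 5)).Nonempty :=
      ⟨q.out, mem_ball_self (by linarith [hpos q.out])⟩
    obtain ⟨d, hdD, hd_ball⟩ := hD.exists_mem_open isOpen_ball hball
    refine ⟨d, hdD, ?_⟩
    have : pieceE q.out d := ball_subset_piece q.out hd_ball
    calc Quotient.mk st d = Quotient.mk st q.out := Quotient.sound (pieceE_symm this)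
      _ = q := q.out_eq
  choose φ hφD hφq using hφ
  have hφinj : Function.Injective (fun q => (⟨φ q, hφD q⟩ : D)) := by
    intro q q' h
    have : φ q = φ q' := congrArg Subtype.val h
    rw [← hφq q, ← hφq q', this]
  have h1 : #(Quotient st) ≤ Cardinal.continuum :=
    le_trans (Cardinal.mk_le_of_injective hφinj) hcard
  have h2 : #(ℕ → Bool) = Cardinal.continuum := by
    rw [← Cardinal.two_power_aleph0, ← Cardinal.mk_bool, ← Cardinal.mk_nat, Cardinal.power_def]
  obtain ⟨ι₀⟩ : Nonempty (Quotient st ↪ (ℕ → Bool)) := by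
    rw [← Cardinal.lift_mk_le']
    rw [h2, Cardinal.lift_continuum, Cardinal.lift_uzero]
    exact h1
  choose p₀ hp₀mem hp₀dense using fun q : Quotient st => exists_denseSeq hpos q.out
  refine ⟨fun w => ι₀ (Quotient.mk st w), fun w => p₀ (Quotient.mk st w), ?_, ?_, ?_, ?_⟩
  · intro y z h
    have hq : Quotient.mk st y = Quotient.mk st z := Quotient.sound h
    exact ⟨congrArg ι₀ hq, congrArg p₀ hq⟩
  · intro y z h hc
    exact h (Quotient.exact (ι₀.injective hc))
  · intro w k
    have h1 := hp₀mem (Quotient.mk st w) k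
    have h2 : pieceE w (Quotient.mk st w).out := by
      have h3 := Quotient.mk_out (s := st) w
      exact pieceE_symm h3
    rwa [piece_eq_of h2]
  · intro w y hy η hη
    have h2 : pieceE w (Quotient.mk st w).out := by
      have h3 := Quotient.mk_out (s := st) w
      exact pieceE_symm h3
    exact hp₀dense (Quotient.mk st w) y (by rwa [← piece_eq_of h2]) η hη

open Classical in
/-- The family of bump functions. -/
noncomputable def FF (ι : M → ℕ → Bool) (p : M → ℕ → M) (t : ℕ × ℕ × ℕ) (w : M) : ℝ :=
  if t.2.2 ∈ pref (ι w) then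
    max 0 (min ((1/2:ℝ)^t.2.1) (sRad (p w t.1) / 5) - dist w (p w t.1))
  else 0

lemma FF_nonneg (ι : M → ℕ → Bool) (p : M → ℕ → M) (t : ℕ × ℕ × ℕ) (w : M) :
    0 ≤ FF ι p t w := by
  rw [FF]
  split
  · exact le_max_left _ _
  · exact le_refl _

lemma FF_le_dist (ι : M → ℕ → Bool) (p : M → ℕ → M)
    (hpmem : ∀ w k, p w k ∈ piece w) (t : ℕ × ℕ × ℕ) {w z : M} (h : ¬ pieceE w z) :
    FF ι p t w ≤ dist w z := by
  rw [FF]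
  split
  · apply max_le dist_nonneg
    have hpt : p w t.1 ∈ piece w := hpmem w t.1
    have hz : z ∉ piece (p w t.1) := by
      intro hz
      exact h (pieceE_trans hpt hz)
    have h1 : sRad (p w t.1) / 5 ≤ dist (p w t.1) z := le_dist_of_notMem_piece hz
    have h2 : dist (p w t.1) z ≤ dist (p w t.1) w + dist w z := dist_triangle _ _ _
    have h3 : min ((1/2:ℝ)^t.2.1) (sRad (p w t.1) / 5) ≤ sRad (p w t.1) / 5 := min_le_right _ _
    rw [dist_comm (p w t.1) w] at h2
    linarith
  · exact dist_nonneg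

lemma FF_lip (ι : M → ℕ → Bool) (p : M → ℕ → M)
    (hconst : ∀ y z, pieceE y z → ι y = ι z ∧ p y = p z)
    (hpmem : ∀ w k, p w k ∈ piece w) (t : ℕ × ℕ × ℕ) :
    LipschitzWith 1 (FF ι p t) := by
  apply LipschitzWith.of_dist_le_mul
  intro w z
  rw [Real.dist_eq, NNReal.coe_one, one_mul]
  by_cases hE : pieceE w z
  · obtain ⟨hι, hp⟩ := hconst w z hE
    rw [FF, FF, ← hι, ← hp]
    split
    · set c := min ((1/2:ℝ)^t.2.1) (sRad (p w t.1) / 5) with hc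
      have key : |max 0 (c - dist w (p w t.1)) - max 0 (c - dist z (p w t.1))| ≤
          |dist w (p w t.1) - dist z (p w t.1)| := by
        rw [max_comm 0 (c - dist w (p w t.1)), max_comm 0 (c - dist z (p w t.1))]
        calc |max (c - dist w (p w t.1)) 0 - max (c - dist z (p w t.1)) 0|
            ≤ |(c - dist w (p w t.1)) - (c - dist z (p w t.1))| :=
              abs_max_sub_max_le_abs _ _ _
          _ = |dist z (p w t.1) - dist w (p w t.1)| := by
              rw [show (c - dist w (p w t.1)) - (c - dist z (p w t.1))
                  = dist z (p w t.1) - dist w (p w t.1) by ring]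
          _ = |dist w (p w t.1) - dist z (p w t.1)| := abs_sub_comm _ _
      refine le_trans key ?_
      exact abs_dist_sub_le _ _ _
    · simpa using dist_nonneg
  · have h1 := FF_le_dist ι p hpmem t hE
    have h2 := FF_le_dist ι p hpmem t (fun hc => hE (pieceE_symm hc))
    rw [dist_comm z w] at h2
    have h3 := FF_nonneg ι p t w
    have h4 := FF_nonneg ι p t z
    rw [abs_sub_le_iff]
    constructor <;> linarith

end Aux

theorem locally_separable_countable_dominating_lipschitz_family
    (M : Type*) [MetricSpace M]
    (hloc : ∀ x : M, ∃ U ∈ nhds x, TopologicalSpace.IsSeparable U)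
    (hdens : ∃ D : Set M, Dense D ∧ #D ≤ Cardinal.continuum) :
    ∃ f : ℕ → M → ℝ, (∀ n, LipschitzWith 1 (f n)) ∧
      ∀ x : M, ∃ ε₀ : ℝ, 0 < ε₀ ∧
        ∀ ε : ℝ, 0 < ε → ε < ε₀ →
          ∀ g : M → ℝ, (∃ K, LipschitzWith K g) →
            (∀ y : M, y ∉ Metric.ball x ε → g y = 0) →
            ∃ K : ℝ, 0 < K ∧
              ∀ y z : M, |g y - g z| ≤ K * ⨆ n : ℕ, |f n y - f n z| := by
  classical
  obtain ⟨D, hD, hDcard⟩ := hdens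
  have hpos : ∀ x : M, 0 < sRad x := sRad_pos hloc
  obtain ⟨ι, p, hconst, hsepcode, hpmem, hpdense⟩ := exists_data hpos hD hDcard
  set E := Denumerable.eqv (ℕ × ℕ × ℕ) with hE
  set f : ℕ → M → ℝ := fun n => FF ι p (E.symm n) with hf
  have hflip : ∀ n, LipschitzWith 1 (f n) := fun n => FF_lip ι p hconst hpmem _
  have hbddsup : ∀ y z : M, BddAbove (Set.range fun n => |f n y - f n z|) := by
    intro y z
    refine ⟨dist y z, ?_⟩
    rintro _ ⟨n, rfl⟩
    have := (hflip n).dist_le_mul y z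
    rwa [Real.dist_eq, NNReal.coe_one, one_mul] at this
  have hsupnn : ∀ y z : M, 0 ≤ ⨆ n, |f n y - f n z| :=
    fun y z => le_trans (abs_nonneg _) (le_ciSup (hbddsup y z) 0)
  refine ⟨f, hflip, ?_⟩
  intro x
  refine ⟨sRad x / 100, by linarith [hpos x], ?_⟩
  intro ε hε hεlt g hglip hsupp
  obtain ⟨L, hg⟩ := hglip
  -- choose the dyadic scale T with 2ε ≤ T < 4ε
  have h4ε : 4 * ε < 1 := by have := sRad_le_two x; linarith
  have hex : ∃ n : ℕ, (1/2:ℝ)^n < 4*ε :=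
    exists_pow_lt_of_lt_one (by linarith) (by norm_num)
  have hjlt : (1/2:ℝ)^(Nat.find hex) < 4*ε := Nat.find_spec hex
  have hjne : Nat.find hex ≠ 0 := by
    intro h; rw [h] at hjlt; norm_num at hjlt; linarith
  set T := (1/2:ℝ)^(Nat.find hex) with hT
  have hjge : 2*ε ≤ T := by
    obtain ⟨j', hj'⟩ := Nat.exists_eq_succ_of_ne_zero hjne
    have hmin := Nat.find_min hex (m := j') (by omega)
    push_neg at hmin
    rw [hT, hj', pow_succ]
    linarith
  have hTpos : 0 < T := by rw [hT]; positivity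
  -- the key lower bound for the supremum
  have key : ∀ y, y ∈ Metric.ball x ε → ∀ z,
      min T (dist y z) ≤ ⨆ n, |f n y - f n z| := by
    intro y hy z
    apply le_of_forall_pos_le_add
    intro η hη
    set η' := min (η/2) ε with hη'
    have hη'pos : 0 < η' := lt_min (by linarith) hε
    have hη'ε : η' ≤ ε := min_le_right _ _
    have hη'η : 2*η' ≤ η := by
      have := min_le_left (η/2) ε
      have : η' ≤ η/2 := this
      linarith
    obtain ⟨k, hk⟩ := hpdense y y (mem_piece_self y) η' hη'pos
    have hdxy : dist x y < ε := by rw [mem_ball, dist_comm] at hy; exact hy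
    have hxpt : dist x (p y k) ≤ dist x y + dist y (p y k) := dist_triangle _ _ _
    have hs1 : sRad x ≤ sRad (p y k) + dist x (p y k) := sRad_lip x (p y k)
    have hspt : T ≤ sRad (p y k) / 5 := by
      have h1 : ε < sRad x / 100 := hεlt
      linarith
    have hεT : ε ≤ T / 2 := by linarith
    -- value of the bump at y
    have hvaly : ∀ m, m ∈ pref (ι y) →
        FF ι p (k, Nat.find hex, m) y = T - dist y (p y k) := by
      intro m hm
      rw [FF]
      simp only
      rw [if_pos hm, min_eq_left hspt, max_eq_right (by linarith)]
    by_cases hEz : pieceE y z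
    · -- same piece
      set m := Encodable.encode ([] : List Bool) with hm
      have hmy : m ∈ pref (ι y) := pref_nonempty _
      obtain ⟨hι, hp⟩ := hconst y z hEz
      set N := E (k, Nat.find hex, m) with hN
      have hfN : f N = FF ι p (k, Nat.find hex, m) := by
        rw [hf, hN]; simp
      have hvz : FF ι p (k, Nat.find hex, m) z
          = max 0 (min T (sRad (p y k) / 5) - dist z (p y k)) := by
        rw [FF]
        simp only
        rw [← hι, ← hp, if_pos hmy]
      have hlow : min T (dist y z) - 2*η' ≤ f N y - f N z := by
        rw [hfN, hvaly m hmy, hvz, min_eq_left hspt]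
        rcases le_or_gt (T - dist z (p y k)) 0 with hc | hc
        · rw [max_eq_left hc]
          have := min_le_left T (dist y z)
          linarith
        · rw [max_eq_right hc.le]
          have htri : dist y z ≤ dist y (p y k) + dist (p y k) z := dist_triangle _ _ _
          rw [dist_comm (p y k) z] at htri
          have := min_le_right T (dist y z)
          linarith
      have h1 : f N y - f N z ≤ |f N y - f N z| := le_abs_self _
      have h2 : |f N y - f N z| ≤ ⨆ n, |f n y - f n z| := le_ciSup (hbddsup y z) N
      linarith
    · -- different pieces
      obtain ⟨m, hmy, hmz⟩ := pref_anti (hsepcode y z hEz)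
      set N := E (k, Nat.find hex, m) with hN
      have hfN : f N = FF ι p (k, Nat.find hex, m) := by
        rw [hf, hN]; simp
      have hvz : FF ι p (k, Nat.find hex, m) z = 0 := by
        rw [FF]
        simp only
        rw [if_neg hmz]
      have hlow : min T (dist y z) - 2*η' ≤ f N y - f N z := by
        rw [hfN, hvaly m hmy, hvz]
        have := min_le_left T (dist y z)
        linarith
      have h1 : f N y - f N z ≤ |f N y - f N z| := le_abs_self _
      have h2 : |f N y - f N z| ≤ ⨆ n, |f n y - f n z| := le_ciSup (hbddsup y z) N
      linarith
  -- uniform bound on g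
  set S := |g x| + (L:ℝ) * ε with hS
  have hSnn : 0 ≤ S := by
    rw [hS]; positivity
  have hgb : ∀ w, |g w| ≤ S := by
    intro w
    by_cases hw : w ∈ Metric.ball x ε
    · have h1 := hg.dist_le_mul w x
      rw [Real.dist_eq] at h1
      have h2 : |g w| - |g x| ≤ |g w - g x| := abs_sub_abs_le_abs_sub _ _
      have h3 : (L:ℝ) * dist w x ≤ (L:ℝ) * ε :=
        mul_le_mul_of_nonneg_left (mem_ball.mp hw).le L.coe_nonneg
      rw [hS]; linarith
    · rw [hsupp w hw]
      simpa using hSnn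
  set K₀ := max (L:ℝ) (2*S/T) with hK₀
  have hK₀nn : 0 ≤ K₀ := le_trans L.coe_nonneg (le_max_left _ _)
  refine ⟨K₀ + 1, by linarith, ?_⟩
  intro y z
  have hbound : (y ∈ Metric.ball x ε ∨ z ∈ Metric.ball x ε) →
      |g y - g z| ≤ K₀ * min T (dist y z) := by
    intro _
    rcases le_total (dist y z) T with hc | hc
    · rw [min_eq_right hc]
      have h1 := hg.dist_le_mul y z
      rw [Real.dist_eq] at h1
      have h2 : (L:ℝ) * dist y z ≤ K₀ * dist y z :=
        mul_le_mul_of_nonneg_right (le_max_left _ _) dist_nonneg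
      linarith
    · rw [min_eq_left hc]
      have h1 : |g y - g z| ≤ |g y| + |g z| := by
        rw [sub_eq_add_neg]
        exact (abs_add_le _ _).trans (by rw [abs_neg])
      have h2 : 2*S = (2*S/T) * T := by field_simp
      have h3 : (2*S/T) * T ≤ K₀ * T :=
        mul_le_mul_of_nonneg_right (le_max_right _ _) hTpos.le
      have h4 := hgb y
      have h5 := hgb z
      linarith
  by_cases hy : y ∈ Metric.ball x ε
  · have hk := key y hy z
    have h1 := hbound (Or.inl hy)
    have h2 : K₀ * min T (dist y z) ≤ K₀ * ⨆ n, |f n y - f n z| :=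
      mul_le_mul_of_nonneg_left hk hK₀nn
    have h3 : K₀ * (⨆ n, |f n y - f n z|) ≤ (K₀ + 1) * ⨆ n, |f n y - f n z| := by
      have := hsupnn y z
      nlinarith
    linarith
  · by_cases hz : z ∈ Metric.ball x ε
    · have hk := key z hz y
      have hswap : (⨆ n, |f n z - f n y|) = ⨆ n, |f n y - f n z| := by
        congr 1
        funext n
        exact abs_sub_comm _ _
      rw [hswap, dist_comm z y] at hk
      have h1 := hbound (Or.inr hz)
      have h2 : K₀ * min T (dist y z) ≤ K₀ * ⨆ n, |f n y - f n z| :=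
        mul_le_mul_of_nonneg_left hk hK₀nn
      have h3 : K₀ * (⨆ n, |f n y - f n z|) ≤ (K₀ + 1) * ⨆ n, |f n y - f n z| := by
        have := hsupnn y z
        nlinarith
      linarith
    · rw [hsupp y hy, hsupp z hz]
      simp only [sub_zero, abs_zero]
      exact mul_nonneg (by linarith) (hsupnn y z)
end
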